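/- Let n ≥ 1, a₁,…,a_n ∈ ℂ with a_n ≠ 0, and let σ be the ℂ-algebra automorphism of ℂ[h] with σ(f(h)) = f(h-1). Define X₊(h) ∈ Mat_n(ℂ[h]) as (1/√2) times the matrix with subdiagonal entries 1, last column (from top) ((h - 1/2)/(n a_n), -a₁/(n a_n), …, -(n-1)a_{n-1}/(n a_n))ᵀ, and zeros elsewhere; define X₋(h) ∈ Mat_n(ℂ[h]) as (1/√2) times the matrix with first column (a₁, 2a₂, …, n a_n)ᵀ, superdiagonal entries h + 1/2, and zeros elsewhere. Then X₊(h)·X₋(h-1) + X₋(h)·X₊(h+1) = h·I_n. -/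
import Mathlib


open Polynomial

/-- The matrix `X₊(h)`: `(1/√2)` times the matrix with subdiagonal entries `1`, last
column `((h - 1/2)/(n aₙ), -a₁/(n aₙ), …, -(n-1)a_{n-1}/(n aₙ))ᵀ`, zeros elsewhere. -/
noncomputable def Xplus (n : ℕ) (a : ℕ → ℂ) : Matrix (Fin n) (Fin n) (Polynomial ℂ) :=
  Matrix.of fun i j =>
    Polynomial.C ((Real.sqrt 2 : ℂ))⁻¹ *
      (if (j : ℕ) = n - 1 then
        (if (i : ℕ) = 0 then
          Polynomial.C (1 / ((n : ℂ) * a n)) * ((X : Polynomial ℂ) - Polynomial.C ((1:ℂ)/2))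
         else -Polynomial.C ((i : ℂ) * a i / ((n : ℂ) * a n)))
       else if (i : ℕ) = (j : ℕ) + 1 then 1 else 0)

/-- The matrix `X₋(h)`: `(1/√2)` times the matrix with first column
`(a₁, 2a₂, …, n aₙ)ᵀ`, superdiagonal entries `h + 1/2`, zeros elsewhere. -/
noncomputable def Xminus (n : ℕ) (a : ℕ → ℂ) : Matrix (Fin n) (Fin n) (Polynomial ℂ) :=
  Matrix.of fun i j =>
    Polynomial.C ((Real.sqrt 2 : ℂ))⁻¹ *
      (if (j : ℕ) = 0 then Polynomial.C (((i : ℕ) + 1 : ℂ) * a ((i : ℕ) + 1))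
       else if (j : ℕ) = (i : ℕ) + 1 then (X : Polynomial ℂ) + Polynomial.C ((1:ℂ)/2)
       else 0)

lemma hc2 : (Polynomial.C ((Real.sqrt 2 : ℂ))⁻¹) * (Polynomial.C ((Real.sqrt 2 : ℂ))⁻¹)
    = Polynomial.C ((1:ℂ)/2) := by
  rw [← C_mul, ← mul_inv, ← Complex.ofReal_mul, Real.mul_self_sqrt (by norm_num)]
  norm_num

lemma hC12 : (Polynomial.C ((1:ℂ)/2) + Polynomial.C ((1:ℂ)/2) : Polynomial ℂ) = 1 := by
  rw [← C_add]; norm_num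

lemma L1 (n : ℕ) (hn : 1 ≤ n) (a : ℕ → ℂ) (han : a n ≠ 0) :
    Xplus n a * (Xminus n a).map (fun p => p.comp ((X : Polynomial ℂ) - 1))
      = (Polynomial.C ((1:ℂ)/2) * ((X : Polynomial ℂ) - Polynomial.C ((1:ℂ)/2))) •
        (1 : Matrix (Fin n) (Fin n) (Polynomial ℂ)) := by
  have hnC : ((n:ℂ) * a n) ≠ 0 := mul_ne_zero (Nat.cast_ne_zero.mpr (by omega)) han
  refine Matrix.ext fun i j => ?_
  rw [Matrix.mul_apply, Matrix.smul_apply, Matrix.one_apply]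
  simp only [Xplus, Xminus, Matrix.map_apply, Matrix.of_apply, mul_comp, C_comp, add_comp,
    sub_comp, X_comp, one_comp, zero_comp, neg_comp,
    apply_ite (fun p => Polynomial.comp p ((X:ℂ[X]) - 1))]
  by_cases hj : (j:ℕ) = 0
  · by_cases hi : (i:ℕ) = 0
    · -- i = j = 0 : single term at k = n-1
      have hij : i = j := Fin.ext (by omega)
      rw [Finset.sum_eq_single ⟨n-1, by omega⟩ (fun k _ hk => by
        have hk' : (k:ℕ) ≠ n - 1 := fun h => hk (Fin.ext h)
        rw [if_neg hk', if_neg (by omega : ¬ (i:ℕ) = (k:ℕ)+1), mul_zero, zero_mul])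
        (by simp)]
      have h1 : ((⟨n-1, by omega⟩ : Fin n) : ℕ) = n - 1 := rfl
      rw [h1, if_pos rfl, if_pos hi, if_pos hj, if_pos hij,
        (by omega : n - 1 + 1 = n),
        (by push_cast [Nat.cast_sub hn]; ring : ((n-1 : ℕ) : ℂ) + 1 = (n : ℂ)),
        smul_eq_mul, mul_one]
      have key : Polynomial.C ((Real.sqrt 2:ℂ))⁻¹ * Polynomial.C ((Real.sqrt 2:ℂ))⁻¹ *
          (Polynomial.C (1 / ((n:ℂ) * a n)) * Polynomial.C ((n:ℂ) * a n))
          = Polynomial.C ((1:ℂ)/2) := by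
        rw [hc2, ← C_mul, one_div_mul_cancel hnC, C_1, mul_one]
      linear_combination ((X:ℂ[X]) - Polynomial.C ((1:ℂ)/2)) * key
    · -- i ≠ 0, j = 0 : two cancelling terms
      have hij : i ≠ j := fun h => hi (by rw [h]; exact hj)
      rw [if_neg hij, smul_zero]
      have hi1 : (i:ℕ) - 1 < n := by omega
      have hne : (⟨(i:ℕ)-1, hi1⟩ : Fin n) ≠ ⟨n-1, by omega⟩ := by
        simp only [ne_eq, Fin.mk.injEq]; omega
      rw [Finset.sum_eq_add (⟨(i:ℕ)-1, hi1⟩ : Fin n) (⟨n-1, by omega⟩ : Fin n) hne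
        (fun k _ hk => by
          have h1 : (k:ℕ) ≠ (i:ℕ) - 1 := fun h => hk.1 (Fin.ext h)
          have h2 : (k:ℕ) ≠ n - 1 := fun h => hk.2 (Fin.ext h)
          rw [if_neg h2, if_neg (by omega : ¬ (i:ℕ) = (k:ℕ)+1), mul_zero, zero_mul])
        (by simp) (by simp)]
      have e1 : ((⟨(i:ℕ)-1, hi1⟩ : Fin n) : ℕ) = (i:ℕ) - 1 := rfl
      have e2 : ((⟨n-1, by omega⟩ : Fin n) : ℕ) = n - 1 := rfl
      rw [e1, e2, if_neg (by omega : ¬ (i:ℕ)-1 = n-1), if_pos (by omega : (i:ℕ) = (i:ℕ)-1+1),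
        if_pos rfl, if_neg hi, if_pos hj, if_pos hj,
        (by omega : (i:ℕ) - 1 + 1 = (i:ℕ)),
        (by push_cast [Nat.cast_sub (by omega : 1 ≤ (i:ℕ))]; ring
          : (((i:ℕ)-1 : ℕ) : ℂ) + 1 = ((i:ℕ) : ℂ)),
        (by omega : n - 1 + 1 = n),
        (by push_cast [Nat.cast_sub hn]; ring : ((n-1 : ℕ) : ℂ) + 1 = (n : ℂ))]
      have key : Polynomial.C (((i:ℕ):ℂ) * a i / ((n:ℂ) * a n)) * Polynomial.C ((n:ℂ) * a n)
          = Polynomial.C (((i:ℕ):ℂ) * a i) := by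
        rw [← C_mul, div_mul_cancel₀ _ hnC]
      linear_combination (-(Polynomial.C ((Real.sqrt 2:ℂ))⁻¹ * Polynomial.C ((Real.sqrt 2:ℂ))⁻¹)) * key
  · -- j ≠ 0 : single term at k = j - 1
    have hj1 : (j:ℕ) - 1 < n := by omega
    rw [Finset.sum_eq_single ⟨(j:ℕ)-1, hj1⟩ (fun k _ hk => by
      have hk' : (k:ℕ) ≠ (j:ℕ) - 1 := fun h => hk (Fin.ext h)
      rw [if_neg hj, if_neg (by omega : ¬ (j:ℕ) = (k:ℕ)+1), mul_zero, mul_zero])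
      (by simp)]
    have e1 : ((⟨(j:ℕ)-1, hj1⟩ : Fin n) : ℕ) = (j:ℕ) - 1 := rfl
    rw [e1, if_neg (by omega : ¬ (j:ℕ)-1 = n-1), if_neg hj,
      if_pos (by omega : (j:ℕ) = (j:ℕ)-1+1)]
    by_cases hij : i = j
    · rw [if_pos (by rw [hij]; omega : (i:ℕ) = (j:ℕ)-1+1), if_pos hij, smul_eq_mul, mul_one]
      linear_combination ((X:ℂ[X]) - 1 + Polynomial.C ((1:ℂ)/2)) * hc2 +
        Polynomial.C ((1:ℂ)/2) * hC12
    · rw [if_neg (fun h => hij (Fin.ext (by omega))), if_neg hij, mul_zero, zero_mul, smul_zero]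

lemma L2 (n : ℕ) (hn : 1 ≤ n) (a : ℕ → ℂ) (han : a n ≠ 0) :
    Xminus n a * (Xplus n a).map (fun p => p.comp ((X : Polynomial ℂ) + 1))
      = (Polynomial.C ((1:ℂ)/2) * ((X : Polynomial ℂ) + Polynomial.C ((1:ℂ)/2))) •
        (1 : Matrix (Fin n) (Fin n) (Polynomial ℂ)) := by
  have hnC : ((n:ℂ) * a n) ≠ 0 := mul_ne_zero (Nat.cast_ne_zero.mpr (by omega)) han
  refine Matrix.ext fun i j => ?_
  rw [Matrix.mul_apply, Matrix.smul_apply, Matrix.one_apply]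
  simp only [Xplus, Xminus, Matrix.map_apply, Matrix.of_apply, mul_comp, C_comp, add_comp,
    sub_comp, X_comp, one_comp, zero_comp, neg_comp,
    apply_ite (fun p => Polynomial.comp p ((X:ℂ[X]) + 1))]
  by_cases hj : (j:ℕ) = n - 1
  · by_cases hi : (i:ℕ) = n - 1
    · -- i = j = n-1 : single term at k = 0
      have hij : i = j := Fin.ext (by omega)
      rw [Finset.sum_eq_single ⟨0, by omega⟩ (fun k _ hk => by
        have hk' : (k:ℕ) ≠ 0 := fun h => hk (Fin.ext h)
        rw [if_neg hk', if_neg (by omega : ¬ (k:ℕ) = (i:ℕ)+1), mul_zero, zero_mul]) (by simp)]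
      have e0 : ((⟨0, by omega⟩ : Fin n) : ℕ) = 0 := rfl
      rw [e0, if_pos rfl, if_pos hj, if_pos rfl, if_pos hij,
        (by omega : (i:ℕ) + 1 = n),
        (by rw [hi]; push_cast [Nat.cast_sub hn]; ring : ((i:ℕ):ℂ) + 1 = (n:ℂ)),
        smul_eq_mul, mul_one]
      have key : Polynomial.C ((n:ℂ) * a n) * Polynomial.C (1 / ((n:ℂ) * a n))
          = 1 := by
        rw [← C_mul, mul_one_div, div_self hnC, C_1]
      linear_combination (Polynomial.C ((Real.sqrt 2:ℂ))⁻¹ * Polynomial.C ((Real.sqrt 2:ℂ))⁻¹)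
          * ((X:ℂ[X]) + 1 - Polynomial.C ((1:ℂ)/2)) * key
        + ((X:ℂ[X]) + 1 - Polynomial.C ((1:ℂ)/2)) * hc2
        - Polynomial.C ((1:ℂ)/2) * hC12
    · -- i ≠ n-1, j = n-1 : two cancelling terms at k = 0 and k = i+1
      have hij : i ≠ j := fun h => hi (by rw [h]; exact hj)
      rw [if_neg hij, smul_zero]
      have hi1 : (i:ℕ) + 1 < n := by omega
      have hne : (⟨0, by omega⟩ : Fin n) ≠ ⟨(i:ℕ)+1, hi1⟩ := by
        simp only [ne_eq, Fin.mk.injEq]; omega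
      rw [Finset.sum_eq_add (⟨0, by omega⟩ : Fin n) (⟨(i:ℕ)+1, hi1⟩ : Fin n) hne
        (fun k _ hk => by
          have h1 : (k:ℕ) ≠ 0 := fun h => hk.1 (Fin.ext h)
          have h2 : (k:ℕ) ≠ (i:ℕ) + 1 := fun h => hk.2 (Fin.ext h)
          rw [if_neg h1, if_neg h2, mul_zero, zero_mul]) (by simp) (by simp)]
      have e0 : ((⟨0, by omega⟩ : Fin n) : ℕ) = 0 := rfl
      have e1 : ((⟨(i:ℕ)+1, hi1⟩ : Fin n) : ℕ) = (i:ℕ) + 1 := rfl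
      rw [e0, e1, if_pos rfl, if_pos hj, if_pos rfl, if_neg (by omega : ¬ (i:ℕ)+1 = 0),
        if_pos rfl, if_pos hj, if_neg (by omega : ¬ (i:ℕ)+1 = 0)]
      have keyC : Polynomial.C (((i:ℕ):ℂ) + 1) * Polynomial.C (a ((i:ℕ)+1))
          = Polynomial.C ((((i:ℕ):ℂ) + 1) * a ((i:ℕ)+1)) := by rw [← C_mul]
      have hcast : (((i:ℕ)+1 : ℕ) : ℂ) = ((i:ℕ):ℂ) + 1 := by push_cast; ring
      rw [hcast]
      have key2 : Polynomial.C ((((i:ℕ):ℂ) + 1) * a ((i:ℕ)+1)) * Polynomial.C (1/((n:ℂ) * a n))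
          = Polynomial.C ((((i:ℕ):ℂ) + 1) * a ((i:ℕ)+1) / ((n:ℂ) * a n)) := by
        rw [← C_mul, mul_one_div]
      linear_combination (Polynomial.C ((Real.sqrt 2:ℂ))⁻¹ * Polynomial.C ((Real.sqrt 2:ℂ))⁻¹)
          * (((X:ℂ[X]) + 1 - Polynomial.C ((1:ℂ)/2)) * key2
            - Polynomial.C ((((i:ℕ):ℂ) + 1) * a ((i:ℕ)+1) / ((n:ℂ) * a n)) * (hC12))
  · -- j ≠ n-1 : single term at k = j+1
    have hj1 : (j:ℕ) + 1 < n := by omega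
    rw [Finset.sum_eq_single ⟨(j:ℕ)+1, hj1⟩ (fun k _ hk => by
      have hk' : (k:ℕ) ≠ (j:ℕ) + 1 := fun h => hk (Fin.ext h)
      rw [if_neg hj, if_neg hk', mul_zero, mul_zero]) (by simp)]
    have e1 : ((⟨(j:ℕ)+1, hj1⟩ : Fin n) : ℕ) = (j:ℕ) + 1 := rfl
    rw [e1, if_neg hj, if_pos rfl, if_neg (by omega : ¬ (j:ℕ)+1 = 0)]
    by_cases hij : i = j
    · rw [if_pos (by rw [hij] : (j:ℕ)+1 = (i:ℕ)+1), if_pos hij, smul_eq_mul, mul_one]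
      linear_combination ((X:ℂ[X]) + Polynomial.C ((1:ℂ)/2)) * hc2
    · rw [if_neg (fun h => hij (Fin.ext (by omega))), if_neg hij, mul_zero, zero_mul, smul_zero]

/-- The matrices `X₊(h)`, `X₋(h)` of the exponential module `E₊(g)` satisfy the
consistency relation `X₊(h)X₋(h-1) + X₋(h)X₊(h+1) = h·Iₙ`. -/
theorem matrix_relation (n : ℕ) (hn : 1 ≤ n) (a : ℕ → ℂ) (han : a n ≠ 0) :
    Xplus n a * (Xminus n a).map (fun p => p.comp ((X : Polynomial ℂ) - 1))
      + Xminus n a * (Xplus n a).map (fun p => p.comp ((X : Polynomial ℂ) + 1))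
    = (X : Polynomial ℂ) • (1 : Matrix (Fin n) (Fin n) (Polynomial ℂ)) := by
  rw [L1 n hn a han, L2 n hn a han, ← add_smul]
  congr 1
  linear_combination (X : Polynomial ℂ) * hC12
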